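/- Nonsingularity of the B-spline collocation matrix (Schoenberg–Whitney-type condition): let ξ be a knot vector, p a degree, and t_0 < t_1 < ⋯ < t_{n−1} strictly increasing collocation points such that N i p (t_i) ≠ 0 for every i ∈ {0, …, n−1}. Then the n × n collocation matrix with entries C_{ij} = N j p (t_i), i, j ∈ {0, …, n−1}, is nonsingular (has nonzero determinant); in particular the square quasi-interpolation system ∑_j q_j N j p (t_i) = g(t_i) has a unique solution for any data g. -/

import Mathlib

/-- Cox–de Boor B-spline basis functions, with the convention that any term whose
denominator vanishes is taken to be `0`. -/
noncomputable def bspline (ξ : ℕ → ℝ) : ℕ → ℕ → ℝ → ℝ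
  | i, 0, x => if ξ i ≤ x ∧ x < ξ (i + 1) then 1 else 0
  | i, p + 1, x =>
      (if ξ (i + p + 1) - ξ i = 0 then 0
        else (x - ξ i) / (ξ (i + p + 1) - ξ i) * bspline ξ i p x) +
      (if ξ (i + p + 2) - ξ (i + 1) = 0 then 0
        else (ξ (i + p + 2) - x) / (ξ (i + p + 2) - ξ (i + 1)) * bspline ξ (i + 1) p x)


lemma bspline_zero (ξ : ℕ → ℝ) (i : ℕ) (x : ℝ) :
    bspline ξ i 0 x = if ξ i ≤ x ∧ x < ξ (i + 1) then 1 else 0 := rfl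

lemma bspline_succ (ξ : ℕ → ℝ) (i p : ℕ) (x : ℝ) :
    bspline ξ i (p + 1) x =
      (if ξ (i + p + 1) - ξ i = 0 then 0
        else (x - ξ i) / (ξ (i + p + 1) - ξ i) * bspline ξ i p x) +
      (if ξ (i + p + 2) - ξ (i + 1) = 0 then 0
        else (ξ (i + p + 2) - x) / (ξ (i + p + 2) - ξ (i + 1)) * bspline ξ (i + 1) p x) := rfl

/-- bspline only depends on knots ξ j .. ξ (j+p+1). -/
lemma bspline_congr {ξ η : ℕ → ℝ} (p : ℕ) : ∀ j, (∀ m, j ≤ m → m ≤ j + p + 1 → ξ m = η m) →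
    ∀ x, bspline ξ j p x = bspline η j p x := by
  induction p with
  | zero =>
    intro j h x
    rw [bspline_zero, bspline_zero, h j le_rfl (by omega), h (j+1) (by omega) (by omega)]
  | succ p ih =>
    intro j h x
    rw [bspline_succ, bspline_succ,
      h j le_rfl (by omega), h (j+p+1) (by omega) (by omega), h (j+p+2) (by omega) (by omega),
      h (j+1) (by omega) (by omega),
      ih j (fun m h1 h2 => h m h1 (by omega)) x, ih (j+1) (fun m h1 h2 => h m (by omega) (by omega)) x]

lemma bspline_support {ξ : ℕ → ℝ} (hξ : Monotone ξ) (p : ℕ) :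
    ∀ j x, bspline ξ j p x ≠ 0 → ξ j ≤ x ∧ x < ξ (j + p + 1) := by
  induction p with
  | zero =>
    intro j x h
    rw [bspline_zero] at h
    by_cases hc : ξ j ≤ x ∧ x < ξ (j+1)
    · exact hc
    · simp [hc] at h
  | succ p ih =>
    intro j x h
    rw [bspline_succ] at h
    rcases (by by_contra hc; push_neg at hc; rw [hc.1, hc.2] at h; simp at h :
        (if ξ (j + p + 1) - ξ j = 0 then (0:ℝ)
        else (x - ξ j) / (ξ (j + p + 1) - ξ j) * bspline ξ j p x) ≠ 0 ∨
        (if ξ (j + p + 2) - ξ (j + 1) = 0 then (0:ℝ)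
        else (ξ (j + p + 2) - x) / (ξ (j + p + 2) - ξ (j + 1)) * bspline ξ (j + 1) p x) ≠ 0) with h1 | h1
    · have hb : bspline ξ j p x ≠ 0 := by
        intro hz; rw [hz] at h1; simp at h1
      obtain ⟨ha, hb'⟩ := ih j x hb
      exact ⟨ha, lt_of_lt_of_le hb' (hξ (by omega))⟩
    · have hb : bspline ξ (j+1) p x ≠ 0 := by
        intro hz; rw [hz] at h1; simp at h1
      obtain ⟨ha, hb'⟩ := ih (j+1) x hb
      refine ⟨le_trans (hξ (by omega)) ha, ?_⟩
      have : j + 1 + p + 1 = j + p + 2 := by omega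
      rw [this] at hb'; exact hb'

lemma bspline_nonneg {ξ : ℕ → ℝ} (hξ : Monotone ξ) (p : ℕ) :
    ∀ j x, 0 ≤ bspline ξ j p x := by
  induction p with
  | zero =>
    intro j x; rw [bspline_zero]; positivity
  | succ p ih =>
    intro j x
    rw [bspline_succ]
    have t1 : (0:ℝ) ≤ (if ξ (j + p + 1) - ξ j = 0 then (0:ℝ)
        else (x - ξ j) / (ξ (j + p + 1) - ξ j) * bspline ξ j p x) := by
      split_ifs with hd
      · exact le_refl 0
      · by_cases hb : bspline ξ j p x = 0
        · rw [hb]; simp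
        · obtain ⟨ha, _⟩ := bspline_support hξ p j x hb
          have hd' : 0 < ξ (j + p + 1) - ξ j := by
            rcases lt_or_eq_of_le (hξ (show j ≤ j + p + 1 by omega)) with h | h
            · linarith
            · exact absurd (by linarith) hd
          exact mul_nonneg (div_nonneg (by linarith) hd'.le) (ih j x)
    have t2 : (0:ℝ) ≤ (if ξ (j + p + 2) - ξ (j + 1) = 0 then (0:ℝ)
        else (ξ (j + p + 2) - x) / (ξ (j + p + 2) - ξ (j + 1)) * bspline ξ (j+1) p x) := by
      split_ifs with hd
      · exact le_refl 0
      · by_cases hb : bspline ξ (j+1) p x = 0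
        · rw [hb]; simp
        · obtain ⟨_, hb'⟩ := bspline_support hξ p (j+1) x hb
          have hd' : 0 < ξ (j + p + 2) - ξ (j + 1) := by
            rcases lt_or_eq_of_le (hξ (show j + 1 ≤ j + p + 2 by omega)) with h | h
            · linarith
            · exact absurd (by linarith) hd
          have h2 : 0 < ξ (j + p + 2) - x := by
            have : j + 1 + p + 1 = j + p + 2 := by omega
            rw [this] at hb'; linarith
          exact mul_nonneg (le_of_lt (div_pos h2 hd')) (ih (j+1) x)
    linarith

lemma bspline_term1_nonneg {ξ : ℕ → ℝ} (hξ : Monotone ξ) (p j : ℕ) (x : ℝ) :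
    0 ≤ (if ξ (j + p + 1) - ξ j = 0 then (0:ℝ)
        else (x - ξ j) / (ξ (j + p + 1) - ξ j) * bspline ξ j p x) := by
  split_ifs with hd
  · exact le_refl 0
  · by_cases hb : bspline ξ j p x = 0
    · rw [hb]; simp
    · obtain ⟨ha, _⟩ := bspline_support hξ p j x hb
      have hd' : 0 < ξ (j + p + 1) - ξ j := by
        rcases lt_or_eq_of_le (hξ (show j ≤ j + p + 1 by omega)) with h | h
        · linarith
        · exact absurd (by linarith) hd
      exact mul_nonneg (div_nonneg (by linarith) hd'.le) (bspline_nonneg hξ p j x)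

lemma bspline_term2_nonneg {ξ : ℕ → ℝ} (hξ : Monotone ξ) (p j : ℕ) (x : ℝ) :
    0 ≤ (if ξ (j + p + 2) - ξ (j + 1) = 0 then (0:ℝ)
        else (ξ (j + p + 2) - x) / (ξ (j + p + 2) - ξ (j + 1)) * bspline ξ (j + 1) p x) := by
  split_ifs with hd
  · exact le_refl 0
  · by_cases hb : bspline ξ (j+1) p x = 0
    · rw [hb]; simp
    · obtain ⟨_, hb'⟩ := bspline_support hξ p (j+1) x hb
      have hd' : 0 < ξ (j + p + 2) - ξ (j + 1) := by
        rcases lt_or_eq_of_le (hξ (show j + 1 ≤ j + p + 2 by omega)) with h | h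
        · linarith
        · exact absurd (by linarith) hd
      have h2 : 0 < ξ (j + p + 2) - x := by
        have e : j + 1 + p + 1 = j + p + 2 := by omega
        rw [e] at hb'; linarith
      exact mul_nonneg (le_of_lt (div_pos h2 hd')) (bspline_nonneg hξ p (j+1) x)

lemma bspline_pos {ξ : ℕ → ℝ} (hξ : Monotone ξ) (p : ℕ) : ∀ j x,
    ((ξ j < x ∧ x < ξ (j + p + 1)) ∨ (x = ξ j ∧ ξ j = ξ (j + p) ∧ x < ξ (j + p + 1))) →
    0 < bspline ξ j p x := by
  induction p with
  | zero =>
    intro j x h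
    rw [bspline_zero]
    rcases h with ⟨h1, h2⟩ | ⟨h1, h2, h3⟩
    · rw [if_pos ⟨h1.le, h2⟩]; norm_num
    · rw [if_pos ⟨h1.ge, by rw [h1]; exact h1 ▸ h3⟩]; norm_num
  | succ p ih =>
    intro j x h
    rw [bspline_succ]
    have e1 : j + (p+1) + 1 = j + p + 2 := by omega
    rw [e1, show j + (p+1) = j + p + 1 from by omega] at h
    rcases h with ⟨h1, h2⟩ | ⟨h1, h2, h3⟩
    · by_cases hx : x < ξ (j + p + 1)
      · have hd : 0 < ξ (j + p + 1) - ξ j := by linarith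
        have hN : 0 < bspline ξ j p x := ih j x (Or.inl ⟨h1, hx⟩)
        have t1 : 0 < (if ξ (j + p + 1) - ξ j = 0 then (0:ℝ)
            else (x - ξ j) / (ξ (j + p + 1) - ξ j) * bspline ξ j p x) := by
          rw [if_neg (by linarith)]
          exact mul_pos (div_pos (by linarith) hd) hN
        have := bspline_term2_nonneg hξ p j x
        linarith
      · push_neg at hx
        have hj1 : ξ (j+1) ≤ x := le_trans (hξ (show j+1 ≤ j+p+1 by omega)) hx
        have hd : 0 < ξ (j + p + 2) - ξ (j + 1) := by linarith
        have hN : 0 < bspline ξ (j+1) p x := by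
          rcases lt_or_eq_of_le hj1 with hlt | heq
          · exact ih (j+1) x (Or.inl ⟨hlt, by rw [show j+1+p+1 = j+p+2 by omega]; exact h2⟩)
          · refine ih (j+1) x (Or.inr ⟨heq.symm, ?_, ?_⟩)
            · have a1 : ξ (j+1+p) ≤ ξ (j+p+1) := hξ (by omega)
              have a2 : ξ (j+1) ≤ ξ (j+1+p) := hξ (by omega)
              linarith [heq.symm.le]
            · rw [show j+1+p+1 = j+p+2 by omega]; exact h2
        have t2 : 0 < (if ξ (j + p + 2) - ξ (j + 1) = 0 then (0:ℝ)
            else (ξ (j + p + 2) - x) / (ξ (j + p + 2) - ξ (j + 1)) * bspline ξ (j+1) p x) := by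
          rw [if_neg (by linarith)]
          exact mul_pos (div_pos (by linarith) hd) hN
        have := bspline_term1_nonneg hξ p j x
        linarith
    · have hj1 : ξ (j+1) = x := by
        have a := hξ (show j ≤ j+1 by omega)
        have b := hξ (show j+1 ≤ j+p+1 by omega)
        have h2' : ξ (j + p + 1) = x := by rw [← h2, ← h1]
        linarith [h1 ▸ a]
      have hd : 0 < ξ (j + p + 2) - ξ (j + 1) := by rw [hj1]; linarith
      have hN : 0 < bspline ξ (j+1) p x := by
        refine ih (j+1) x (Or.inr ⟨hj1.symm, ?_, ?_⟩)
        · rw [hj1, show j+1+p = j+p+1 by omega, ← h2, ← h1]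
        · rw [show j+1+p+1 = j+p+2 by omega]; exact h3
      have t2 : 0 < (if ξ (j + p + 2) - ξ (j + 1) = 0 then (0:ℝ)
          else (ξ (j + p + 2) - x) / (ξ (j + p + 2) - ξ (j + 1)) * bspline ξ (j+1) p x) := by
        rw [if_neg (by linarith)]
        exact mul_pos (div_pos (by linarith) hd) hN
      have t1 : (if ξ (j + p + 1) - ξ j = 0 then (0:ℝ)
          else (x - ξ j) / (ξ (j + p + 1) - ξ j) * bspline ξ j p x) = 0 := by
        rw [if_pos (by rw [← h2, ← h1]; ring)]
      linarith

lemma bspline_char {ξ : ℕ → ℝ} (hξ : Monotone ξ) (p : ℕ) : ∀ j x, bspline ξ j p x ≠ 0 →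
    (ξ j < x ∧ x < ξ (j + p + 1)) ∨ (x = ξ j ∧ ξ j = ξ (j + p) ∧ x < ξ (j + p + 1)) := by
  induction p with
  | zero =>
    intro j x h
    rw [bspline_zero] at h
    by_cases hc : ξ j ≤ x ∧ x < ξ (j+1)
    · rcases lt_or_eq_of_le hc.1 with hlt | heq
      · exact Or.inl ⟨hlt, hc.2⟩
      · exact Or.inr ⟨heq.symm, rfl, hc.2⟩
    · simp [hc] at h
  | succ p ih =>
    intro j x h
    rw [bspline_succ] at h
    have e1 : j + (p+1) + 1 = j + p + 2 := by omega
    rw [e1, show j + (p+1) = j + p + 1 from by omega]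
    have h' : (if ξ (j + p + 1) - ξ j = 0 then (0:ℝ)
        else (x - ξ j) / (ξ (j + p + 1) - ξ j) * bspline ξ j p x) ≠ 0 ∨
        (if ξ (j + p + 2) - ξ (j + 1) = 0 then (0:ℝ)
        else (ξ (j + p + 2) - x) / (ξ (j + p + 2) - ξ (j + 1)) * bspline ξ (j + 1) p x) ≠ 0 := by
      by_contra hc; push_neg at hc; rw [hc.1, hc.2] at h; simp at h
    rcases h' with h1 | h1
    · rw [if_neg (by intro hz; rw [if_pos hz] at h1; exact h1 rfl)] at h1
      have hx : x ≠ ξ j := by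
        intro hz; rw [hz] at h1; simp at h1
      have hN : bspline ξ j p x ≠ 0 := by
        intro hz; rw [hz] at h1; simp at h1
      rcases ih j x hN with ⟨a, b⟩ | ⟨a, _, _⟩
      · exact Or.inl ⟨a, lt_of_lt_of_le b (hξ (by omega))⟩
      · exact absurd a hx
    · rw [if_neg (by intro hz; rw [if_pos hz] at h1; exact h1 rfl)] at h1
      have hN : bspline ξ (j+1) p x ≠ 0 := by
        intro hz; rw [hz] at h1; simp at h1
      rcases ih (j+1) x hN with ⟨a, b⟩ | ⟨a, b, c⟩
      · refine Or.inl ⟨lt_of_le_of_lt (hξ (show j ≤ j+1 by omega)) a, ?_⟩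
        rw [show j+1+p+1 = j+p+2 by omega] at b; exact b
      · rw [show j+1+p+1 = j+p+2 by omega] at c
        rcases lt_or_eq_of_le (le_trans (hξ (show j ≤ j+1 by omega)) a.ge) with hlt | heq
        · exact Or.inl ⟨hlt, c⟩
        · refine Or.inr ⟨heq.symm, ?_, c⟩
          rw [show j+1+p = j+p+1 by omega] at b
          rw [heq, a, b]

noncomputable def insKnot (ξ : ℕ → ℝ) (k : ℕ) (u : ℝ) : ℕ → ℝ :=
  fun m => if m ≤ k then ξ m else if m = k + 1 then u else ξ (m - 1)

noncomputable def gam (ξ : ℕ → ℝ) (u : ℝ) (k p j : ℕ) : ℝ :=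
  if j + p ≤ k then 1 else if k + 1 ≤ j then 0 else (u - ξ j) / (ξ (j + p) - ξ j)

variable {ξ : ℕ → ℝ} {k : ℕ} {u : ℝ}

lemma insKnot_of_le {m : ℕ} (h : m ≤ k) : insKnot ξ k u m = ξ m := by
  simp [insKnot, h]

lemma insKnot_k1 : insKnot ξ k u (k+1) = u := by
  simp [insKnot]

lemma insKnot_of_ge {m : ℕ} (h : k + 2 ≤ m) : insKnot ξ k u m = ξ (m - 1) := by
  have h1 : ¬ m ≤ k := by omega
  have h2 : ¬ m = k + 1 := by omega
  simp [insKnot, h1, h2]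

lemma insKnot_mono (hξ : Monotone ξ) (hku : ξ k ≤ u) (hk1 : u < ξ (k+1)) :
    Monotone (insKnot ξ k u) := by
  apply monotone_nat_of_le_succ
  intro m
  rcases lt_trichotomy m k with h | h | h
  · rw [insKnot_of_le h.le, insKnot_of_le (by omega)]
    exact hξ (by omega)
  · subst h
    rw [insKnot_of_le le_rfl, insKnot_k1]
    exact hku
  · rcases Nat.eq_or_lt_of_le h with h' | h'
    · rw [← h', insKnot_k1, insKnot_of_ge (by omega)]
      simp only [Nat.add_sub_cancel]
      exact hk1.le
    · rw [insKnot_of_ge (by omega), insKnot_of_ge (by omega)]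
      exact hξ (by omega)

lemma gam_one {p j : ℕ} (h : j + p ≤ k) : gam ξ u k p j = 1 := by
  simp [gam, h]

lemma gam_zero {p j : ℕ} (h : k + 1 ≤ j) : gam ξ u k p j = 0 := by
  have h1 : ¬ j + p ≤ k := by omega
  simp [gam, h1, h]

lemma gam_mid {p j : ℕ} (h1 : k + 1 ≤ j + p) (h2 : j ≤ k) :
    gam ξ u k p j = (u - ξ j) / (ξ (j + p) - ξ j) := by
  have g1 : ¬ j + p ≤ k := by omega
  have g2 : ¬ k + 1 ≤ j := by omega
  simp [gam, g1, g2]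

lemma mid_den_pos (hξ : Monotone ξ) (hku : ξ k ≤ u) (hk1 : u < ξ (k+1))
    {p j : ℕ} (h1 : k + 1 ≤ j + p) (h2 : j ≤ k) : 0 < ξ (j + p) - ξ j := by
  have a1 : ξ j ≤ ξ k := hξ h2
  have a2 : ξ (k+1) ≤ ξ (j + p) := hξ h1
  linarith

lemma gam_nonneg (hξ : Monotone ξ) (hku : ξ k ≤ u) (hk1 : u < ξ (k+1)) (p j : ℕ) :
    0 ≤ gam ξ u k p j := by
  rcases le_or_gt (j + p) k with h | h
  · rw [gam_one h]; norm_num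
  · rcases le_or_gt (k+1) j with h' | h'
    · rw [gam_zero h']
    · rw [gam_mid (by omega) (by omega)]
      have := mid_den_pos hξ hku hk1 (p := p) (j := j) (by omega) (by omega)
      have a1 : ξ j ≤ ξ k := hξ (by omega)
      apply div_nonneg (by linarith) this.le

lemma gam_le_one (hξ : Monotone ξ) (hku : ξ k ≤ u) (hk1 : u < ξ (k+1)) (p j : ℕ) :
    gam ξ u k p j ≤ 1 := by
  rcases le_or_gt (j + p) k with h | h
  · rw [gam_one h]
  · rcases le_or_gt (k+1) j with h' | h'
    · rw [gam_zero h']; norm_num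
    · rw [gam_mid (by omega) (by omega)]
      have hd := mid_den_pos hξ hku hk1 (p := p) (j := j) (by omega) (by omega)
      have a2 : ξ (k+1) ≤ ξ (j + p) := hξ (by omega)
      rw [div_le_one hd]
      linarith

lemma ite_zero_mul'' (c : Prop) [Decidable c] (q N : ℝ) :
    (if c then (0:ℝ) else q * N) = (if c then 0 else q) * N := by
  split_ifs <;> simp

lemma boehm_S1 (hξ : Monotone ξ) (hku : ξ k ≤ u) (hk1 : u < ξ (k+1)) (p j : ℕ) (x : ℝ) :
    (if ξ (j+p+1) - ξ j = 0 then (0:ℝ) else (x - ξ j)/(ξ (j+p+1) - ξ j)) *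
      (gam ξ u k p j * bspline (insKnot ξ k u) j p x)
    = gam ξ u k (p+1) j *
      ((if insKnot ξ k u (j+p+1) - insKnot ξ k u j = 0 then (0:ℝ)
        else (x - insKnot ξ k u j)/(insKnot ξ k u (j+p+1) - insKnot ξ k u j)) *
        bspline (insKnot ξ k u) j p x) := by
  by_cases hN : bspline (insKnot ξ k u) j p x = 0
  · rw [hN]; ring
  have hξ' := insKnot_mono hξ hku hk1
  obtain ⟨hs1, hs2⟩ := bspline_support hξ' p j x hN
  rcases le_or_gt (k+1) j with hr | hr
  · rw [gam_zero hr, gam_zero hr]; ring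
  rcases le_or_gt (j+p+1) k with hl | hm
  · rw [gam_one (show j + p ≤ k by omega), gam_one (show j + (p+1) ≤ k by omega),
      insKnot_of_le (show j ≤ k by omega), insKnot_of_le hl]
    ring
  · have hΓ : gam ξ u k (p+1) j = (u - ξ j)/(ξ (j+p+1) - ξ j) :=
      gam_mid (by omega) (by omega)
    rw [hΓ]
    have hD1 : 0 < ξ (j+p+1) - ξ j := by
      have a1 : ξ j ≤ ξ k := hξ (by omega)
      have a2 : ξ (k+1) ≤ ξ (j+p+1) := hξ (by omega)
      linarith
    rw [if_neg (ne_of_gt hD1), insKnot_of_le (show j ≤ k by omega)]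
    rcases le_or_gt (j+p) k with hpk | hpk
    · rw [gam_one hpk]
      have h1 : insKnot ξ k u (j+p+1) = u := by
        rw [show j+p+1 = k+1 by omega]; exact insKnot_k1
      rw [h1]
      by_cases hu : u - ξ j = 0
      · exfalso
        rw [insKnot_of_le (show j ≤ k by omega)] at hs1
        rw [h1] at hs2
        linarith
      · rw [if_neg hu]
        field_simp
    · rw [gam_mid (show k + 1 ≤ j + p by omega) (show j ≤ k by omega)]
      have hd : 0 < ξ (j+p) - ξ j := by
        have a1 : ξ j ≤ ξ k := hξ (by omega)
        have a2 : ξ (k+1) ≤ ξ (j+p) := hξ (by omega)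
        linarith
      have h1 : insKnot ξ k u (j+p+1) = ξ (j+p) := by
        rw [insKnot_of_ge (by omega), show j+p+1-1 = j+p by omega]
      rw [h1, if_neg (ne_of_gt hd)]
      field_simp

lemma boehm_S3 (hξ : Monotone ξ) (hku : ξ k ≤ u) (hk1 : u < ξ (k+1)) (p j : ℕ) (x : ℝ) :
    (if ξ (j+p+2) - ξ (j+1) = 0 then (0:ℝ) else (ξ (j+p+2) - x)/(ξ (j+p+2) - ξ (j+1))) *
      ((1 - gam ξ u k p (j+2)) * bspline (insKnot ξ k u) (j+2) p x)
    = (1 - gam ξ u k (p+1) (j+1)) *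
      ((if insKnot ξ k u (j+p+3) - insKnot ξ k u (j+2) = 0 then (0:ℝ)
        else (insKnot ξ k u (j+p+3) - x)/(insKnot ξ k u (j+p+3) - insKnot ξ k u (j+2))) *
        bspline (insKnot ξ k u) (j+2) p x) := by
  by_cases hN : bspline (insKnot ξ k u) (j+2) p x = 0
  · rw [hN]; ring
  have hξ' := insKnot_mono hξ hku hk1
  obtain ⟨hs1, hs2⟩ := bspline_support hξ' p (j+2) x hN
  rw [show j+2+p+1 = j+p+3 by omega] at hs2
  rcases le_or_gt (j+p+2) k with hl | hm
  · rw [gam_one (show j+2 + p ≤ k by omega), gam_one (show j+1 + (p+1) ≤ k by omega)]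
    ring
  rcases le_or_gt (k+1) (j+1) with hr | hr
  · rw [gam_zero hr, gam_zero (show k+1 ≤ j+2 by omega)]
    have e1 : insKnot ξ k u (j+2) = ξ (j+1) := by
      rw [insKnot_of_ge (by omega), show j+2-1 = j+1 by omega]
    have e2 : insKnot ξ k u (j+p+3) = ξ (j+p+2) := by
      rw [insKnot_of_ge (by omega), show j+p+3-1 = j+p+2 by omega]
    rw [e1, e2]
    ring
  · have hΓ : gam ξ u k (p+1) (j+1) = (u - ξ (j+1))/(ξ (j+p+2) - ξ (j+1)) := by
      have := gam_mid (ξ := ξ) (u := u) (k := k) (p := p+1) (j := j+1)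
        (show k+1 ≤ j+1 + (p+1) by omega) (show j+1 ≤ k by omega)
      rw [show j+1+(p+1) = j+p+2 by omega] at this
      exact this
    rw [hΓ]
    have hD2 : 0 < ξ (j+p+2) - ξ (j+1) := by
      have a1 : ξ (j+1) ≤ ξ k := hξ (by omega)
      have a2 : ξ (k+1) ≤ ξ (j+p+2) := hξ (by omega)
      linarith
    rw [if_neg (ne_of_gt hD2)]
    rcases le_or_gt (k+1) (j+2) with hc2 | hc3
    · rw [gam_zero hc2]
      have e1 : insKnot ξ k u (j+2) = u := by
        rw [show j+2 = k+1 by omega]; exact insKnot_k1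
      have e2 : insKnot ξ k u (j+p+3) = ξ (j+p+2) := by
        rw [insKnot_of_ge (by omega), show j+p+3-1 = j+p+2 by omega]
      rw [e1, e2]
      by_cases hu : ξ (j+p+2) - u = 0
      · exfalso
        rw [e1] at hs1
        rw [e2] at hs2
        linarith
      · rw [if_neg hu]
        field_simp
        ring
    · have hγ : gam ξ u k p (j+2) = (u - ξ (j+2))/(ξ (j+p+2) - ξ (j+2)) := by
        have := gam_mid (ξ := ξ) (u := u) (k := k) (p := p) (j := j+2)
          (show k+1 ≤ j+2 + p by omega) (show j+2 ≤ k by omega)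
        rw [show j+2+p = j+p+2 by omega] at this
        exact this
      rw [hγ]
      have hd2 : 0 < ξ (j+p+2) - ξ (j+2) := by
        have a1 : ξ (j+2) ≤ ξ k := hξ (by omega)
        have a2 : ξ (k+1) ≤ ξ (j+p+2) := hξ (by omega)
        linarith
      have e1 : insKnot ξ k u (j+2) = ξ (j+2) := insKnot_of_le (by omega)
      have e2 : insKnot ξ k u (j+p+3) = ξ (j+p+2) := by
        rw [insKnot_of_ge (by omega), show j+p+3-1 = j+p+2 by omega]
      rw [e1, e2, if_neg (ne_of_gt hd2)]
      field_simp
      ring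

lemma boehm_S2 (hξ : Monotone ξ) (hku : ξ k ≤ u) (hk1 : u < ξ (k+1)) (p j : ℕ) (x : ℝ) :
    (if ξ (j+p+1) - ξ j = 0 then (0:ℝ) else (x - ξ j)/(ξ (j+p+1) - ξ j)) *
      ((1 - gam ξ u k p (j+1)) * bspline (insKnot ξ k u) (j+1) p x)
    + (if ξ (j+p+2) - ξ (j+1) = 0 then (0:ℝ) else (ξ (j+p+2) - x)/(ξ (j+p+2) - ξ (j+1))) *
      (gam ξ u k p (j+1) * bspline (insKnot ξ k u) (j+1) p x)
    = gam ξ u k (p+1) j *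
      ((if insKnot ξ k u (j+p+2) - insKnot ξ k u (j+1) = 0 then (0:ℝ)
        else (insKnot ξ k u (j+p+2) - x)/(insKnot ξ k u (j+p+2) - insKnot ξ k u (j+1))) *
        bspline (insKnot ξ k u) (j+1) p x)
    + (1 - gam ξ u k (p+1) (j+1)) *
      ((if insKnot ξ k u (j+p+2) - insKnot ξ k u (j+1) = 0 then (0:ℝ)
        else (x - insKnot ξ k u (j+1))/(insKnot ξ k u (j+p+2) - insKnot ξ k u (j+1))) *
        bspline (insKnot ξ k u) (j+1) p x) := by
  by_cases hN : bspline (insKnot ξ k u) (j+1) p x = 0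
  · rw [hN]; ring
  have hξ' := insKnot_mono hξ hku hk1
  obtain ⟨hs1, hs2⟩ := bspline_support hξ' p (j+1) x hN
  rw [show j+1+p+1 = j+p+2 by omega] at hs2
  rcases le_or_gt (j+p+1) k with hA | hC
  · -- region A
    rw [gam_one (show j+1 + p ≤ k by omega), gam_one (show j + (p+1) ≤ k by omega)]
    rcases le_or_gt (j+p+2) k with hA1 | hA2
    · rw [gam_one (show j+1 + (p+1) ≤ k by omega),
        insKnot_of_le (show j+1 ≤ k by omega), insKnot_of_le (show j+p+2 ≤ k from hA1)]
      ring
    · have hΓ1 : gam ξ u k (p+1) (j+1) = (u - ξ (j+1))/(ξ (j+p+2) - ξ (j+1)) := by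
        have := gam_mid (ξ := ξ) (u := u) (k := k) (p := p+1) (j := j+1)
          (show k+1 ≤ j+1+(p+1) by omega) (show j+1 ≤ k by omega)
        rw [show j+1+(p+1) = j+p+2 by omega] at this
        exact this
      rw [hΓ1]
      have hD2 : 0 < ξ (j+p+2) - ξ (j+1) := by
        have a1 : ξ (j+1) ≤ ξ k := hξ (by omega)
        have a2 : ξ (k+1) ≤ ξ (j+p+2) := hξ (by omega)
        linarith
      rw [if_neg (ne_of_gt hD2)]
      have e1 : insKnot ξ k u (j+1) = ξ (j+1) := insKnot_of_le (by omega)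
      have e2 : insKnot ξ k u (j+p+2) = u := by
        rw [show j+p+2 = k+1 by omega]; exact insKnot_k1
      rw [e1, e2]
      by_cases hu : u - ξ (j+1) = 0
      · exfalso
        rw [e1] at hs1
        rw [e2] at hs2
        linarith
      · rw [if_neg hu, if_neg hu]
        field_simp
        ring
  rcases le_or_gt (k+1) j with hB | hCC
  · -- region B
    rw [gam_zero (show k+1 ≤ j+1 by omega), gam_zero hB, gam_zero (show k+1 ≤ j+1 by omega)]
    have e1 : insKnot ξ k u (j+1) = ξ j := by
      rw [insKnot_of_ge (by omega), show j+1-1 = j by omega]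
    have e2 : insKnot ξ k u (j+p+2) = ξ (j+p+1) := by
      rw [insKnot_of_ge (by omega), show j+p+2-1 = j+p+1 by omega]
    rw [e1, e2]
    ring
  · -- region C : j ≤ k and k+1 ≤ j+p+1
    have hΓ : gam ξ u k (p+1) j = (u - ξ j)/(ξ (j+p+1) - ξ j) :=
      gam_mid (by omega) (by omega)
    rw [hΓ]
    have hD1 : 0 < ξ (j+p+1) - ξ j := by
      have a1 : ξ j ≤ ξ k := hξ (by omega)
      have a2 : ξ (k+1) ≤ ξ (j+p+1) := hξ (by omega)
      linarith
    rw [if_neg (ne_of_gt hD1)]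
    rcases le_or_gt (k+1) (j+1) with hC1 | hC2
    · -- C1 : j = k
      rw [gam_zero hC1, gam_zero hC1]
      have e1 : insKnot ξ k u (j+1) = u := by
        rw [show j+1 = k+1 by omega]; exact insKnot_k1
      have e2 : insKnot ξ k u (j+p+2) = ξ (j+p+1) := by
        rw [insKnot_of_ge (by omega), show j+p+2-1 = j+p+1 by omega]
      rw [e1, e2]
      by_cases hu : ξ (j+p+1) - u = 0
      · exfalso
        rw [e1] at hs1
        rw [e2] at hs2
        linarith
      · rw [if_neg hu, if_neg hu]
        field_simp
        ring
    · -- C2 : j+1 ≤ k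
      have hγ1 : gam ξ u k p (j+1) = (u - ξ (j+1))/(ξ (j+p+1) - ξ (j+1)) := by
        have := gam_mid (ξ := ξ) (u := u) (k := k) (p := p) (j := j+1)
          (show k+1 ≤ j+1+p by omega) (show j+1 ≤ k by omega)
        rw [show j+1+p = j+p+1 by omega] at this
        exact this
      have hΓ1 : gam ξ u k (p+1) (j+1) = (u - ξ (j+1))/(ξ (j+p+2) - ξ (j+1)) := by
        have := gam_mid (ξ := ξ) (u := u) (k := k) (p := p+1) (j := j+1)
          (show k+1 ≤ j+1+(p+1) by omega) (show j+1 ≤ k by omega)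
        rw [show j+1+(p+1) = j+p+2 by omega] at this
        exact this
      rw [hγ1, hΓ1]
      have hd1 : 0 < ξ (j+p+1) - ξ (j+1) := by
        have a1 : ξ (j+1) ≤ ξ k := hξ (by omega)
        have a2 : ξ (k+1) ≤ ξ (j+p+1) := hξ (by omega)
        linarith
      have hD2 : 0 < ξ (j+p+2) - ξ (j+1) := by
        have a1 : ξ (j+1) ≤ ξ k := hξ (by omega)
        have a2 : ξ (k+1) ≤ ξ (j+p+2) := hξ (by omega)
        linarith
      rw [if_neg (ne_of_gt hD2)]
      have e1 : insKnot ξ k u (j+1) = ξ (j+1) := insKnot_of_le (by omega)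
      have e2 : insKnot ξ k u (j+p+2) = ξ (j+p+1) := by
        rw [insKnot_of_ge (by omega), show j+p+2-1 = j+p+1 by omega]
      rw [e1, e2, if_neg (ne_of_gt hd1), if_neg (ne_of_gt hd1)]
      field_simp
      ring

lemma indicator_split {A B C x : ℝ} (h1 : A ≤ B) (h2 : B ≤ C) :
    (if A ≤ x ∧ x < C then (1:ℝ) else 0) =
    (if A ≤ x ∧ x < B then (1:ℝ) else 0) + (if B ≤ x ∧ x < C then (1:ℝ) else 0) := by
  by_cases hb : x < B
  · have hc : ¬ (B ≤ x) := not_le.mpr hb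
    by_cases ha : A ≤ x
    · rw [if_pos ⟨ha, lt_of_lt_of_le hb h2⟩, if_pos ⟨ha, hb⟩, if_neg (fun h => hc h.1)]; ring
    · rw [if_neg (fun h => ha h.1), if_neg (fun h => ha h.1), if_neg (fun h => hc h.1)]; ring
  · push_neg at hb
    have ha : A ≤ x := le_trans h1 hb
    by_cases hc : x < C
    · rw [if_pos ⟨ha, hc⟩, if_neg (fun h => absurd h.2 (not_lt.mpr hb)), if_pos ⟨hb, hc⟩]; ring
    · rw [if_neg (fun h => hc h.2), if_neg (fun h => absurd h.2 (not_lt.mpr hb)),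
        if_neg (fun h => hc h.2)]; ring

lemma boehm (hξ : Monotone ξ) (hku : ξ k ≤ u) (hk1 : u < ξ (k+1)) (p : ℕ) :
    ∀ j x, bspline ξ j p x =
      gam ξ u k p j * bspline (insKnot ξ k u) j p x
      + (1 - gam ξ u k p (j+1)) * bspline (insKnot ξ k u) (j+1) p x := by
  induction p with
  | zero =>
    intro j x
    rcases lt_trichotomy j k with h | h | h
    · rw [gam_one (show j + 0 ≤ k by omega), gam_one (show j+1 + 0 ≤ k by omega)]
      have e := bspline_congr (ξ := ξ) (η := insKnot ξ k u) 0 j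
        (fun m h1 h2 => (insKnot_of_le (show m ≤ k by omega)).symm) x
      linear_combination e
    · rw [gam_one (show j + 0 ≤ k by omega), gam_zero (show k+1 ≤ j+1 by omega)]
      rw [bspline_zero, bspline_zero, bspline_zero,
        insKnot_of_le (show j ≤ k by omega)]
      have e1 : insKnot ξ k u (j+1) = u := by
        rw [show j+1 = k+1 by omega]; exact insKnot_k1
      have e2 : insKnot ξ k u (j+1+1) = ξ (j+1) := by
        rw [insKnot_of_ge (by omega), show j+1+1-1 = j+1 by omega]
      rw [e1, e2]
      have h1 : ξ j ≤ u := by rw [h]; exact hku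
      have h2 : u ≤ ξ (j+1) := by rw [show j+1 = k+1 by omega]; exact hk1.le
      linear_combination indicator_split (x := x) h1 h2
    · rw [gam_zero (show k+1 ≤ j by omega), gam_zero (show k+1 ≤ j+1 by omega)]
      rw [bspline_zero, bspline_zero, bspline_zero]
      have e1 : insKnot ξ k u (j+1) = ξ j := by
        rw [insKnot_of_ge (by omega), show j+1-1 = j by omega]
      have e2 : insKnot ξ k u (j+1+1) = ξ (j+1) := by
        rw [insKnot_of_ge (by omega), show j+1+1-1 = j+1 by omega]
      rw [e1, e2]
      ring
  | succ p ih =>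
    intro j x
    rw [bspline_succ ξ j p x, bspline_succ (insKnot ξ k u) j p x,
      bspline_succ (insKnot ξ k u) (j+1) p x, ih j x, ih (j+1) x]
    simp only [show j+1+p+1 = j+p+2 by omega, show j+1+p+2 = j+p+3 by omega,
      show j+1+1 = j+2 by omega]
    simp only [ite_zero_mul'']
    linear_combination boehm_S1 hξ hku hk1 p j x + boehm_S2 hξ hku hk1 p j x
      + boehm_S3 hξ hku hk1 p j x

lemma slot_exists (hξ : Monotone ξ) {x : ℝ} {a c : ℕ} (h1 : ξ a ≤ x) (h2 : x < ξ c) :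
    ∃ k, ξ k ≤ x ∧ x < ξ (k+1) := by
  classical
  have hac : a < c := by
    by_contra hc; push_neg at hc
    exact absurd h2 (not_lt.mpr (le_trans (hξ hc) h1))
  set P : ℕ → Prop := fun m => ξ m ≤ x with hP
  have hPa : P a := h1
  have hPc : ¬ P c := not_le.mpr h2
  set K := Nat.findGreatest P c with hK
  have hPK : P K := Nat.findGreatest_spec (le_of_lt hac) hPa
  have hKc : K < c := by
    rcases lt_or_eq_of_le (Nat.findGreatest_le (P := P) c) with h | h
    · exact h
    · exact absurd (h ▸ hPK) hPc
  have hnot : ¬ P (K+1) := Nat.findGreatest_is_greatest (n := c) (by omega) (by omega)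
  exact ⟨K, hPK, not_le.mp hnot⟩

lemma chain_impossible (hξ : Monotone ξ) (hku : ξ k ≤ u) (hk1 : u < ξ (k+1)) (p : ℕ)
    {a b : ℕ} (hab : a < b) {s s' : ℝ} (hss : s < s')
    (h1 : gam ξ u k p a * bspline (insKnot ξ k u) a p s = 0)
    (h2 : (1 - gam ξ u k p (a+1)) * bspline (insKnot ξ k u) (a+1) p s ≠ 0)
    (h3 : gam ξ u k p b * bspline (insKnot ξ k u) b p s' ≠ 0)
    (h4 : (1 - gam ξ u k p (b+1)) * bspline (insKnot ξ k u) (b+1) p s' = 0) :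
    False := by
  have hξ' := insKnot_mono hξ hku hk1
  have hγb : gam ξ u k p b ≠ 0 := fun h => h3 (by rw [h]; ring)
  have hNb : bspline (insKnot ξ k u) b p s' ≠ 0 := fun h => h3 (by rw [h]; ring)
  have hγa1 : gam ξ u k p (a+1) ≠ 1 := fun h => h2 (by rw [h]; ring)
  have hNa1 : bspline (insKnot ξ k u) (a+1) p s ≠ 0 := fun h => h2 (by rw [h]; ring)
  have hbk : b ≤ k := by
    by_contra hc; push_neg at hc
    exact hγb (gam_zero (by omega))
  have hkap : k ≤ a + p := by
    by_contra hc; push_neg at hc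
    exact hγa1 (gam_one (by omega))
  have hγa : gam ξ u k p a ≠ 0 := by
    rcases le_or_gt (a + p) k with h | h
    · rw [gam_one h]; norm_num
    · have hγbval : gam ξ u k p b = (u - ξ b)/(ξ (b+p) - ξ b) :=
        gam_mid (by omega) (by omega)
      have hdb : 0 < ξ (b+p) - ξ b := by
        have a1 : ξ b ≤ ξ k := hξ (by omega)
        have a2 : ξ (k+1) ≤ ξ (b+p) := hξ (by omega)
        linarith
      have hub : ξ b < u := by
        by_contra hc; push_neg at hc
        apply hγb
        rw [hγbval]
        have hle : (u - ξ b)/(ξ (b+p) - ξ b) ≤ 0 :=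
          div_nonpos_of_nonpos_of_nonneg (by linarith) hdb.le
        have hge := gam_nonneg hξ hku hk1 p b
        rw [hγbval] at hge
        linarith
      rw [gam_mid (by omega) (by omega)]
      have hda : 0 < ξ (a+p) - ξ a := by
        have a1 : ξ a ≤ ξ k := hξ (by omega)
        have a2 : ξ (k+1) ≤ ξ (a+p) := hξ (by omega)
        linarith
      have hua : ξ a < u := lt_of_le_of_lt (hξ hab.le) hub
      exact ne_of_gt (div_pos (by linarith) hda)
  have hNa : bspline (insKnot ξ k u) a p s = 0 := by
    rcases mul_eq_zero.mp h1 with h | h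
    · exact absurd h hγa
    · exact h
  have hγb1 : gam ξ u k p (b+1) ≠ 1 := by
    rcases le_or_gt (b+1+p) k with h | h
    · exact absurd h (by omega)
    rcases le_or_gt (k+1) (b+1) with h' | h'
    · rw [gam_zero h']; norm_num
    · rw [gam_mid (by omega) (by omega)]
      have hd : 0 < ξ (b+1+p) - ξ (b+1) := by
        have a1 : ξ (b+1) ≤ ξ k := hξ (by omega)
        have a2 : ξ (k+1) ≤ ξ (b+1+p) := hξ (by omega)
        linarith
      have hu : u < ξ (b+1+p) := lt_of_lt_of_le hk1 (hξ (by omega))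
      exact ne_of_lt ((div_lt_one hd).mpr (by linarith))
  have hNb1 : bspline (insKnot ξ k u) (b+1) p s' = 0 := by
    rcases mul_eq_zero.mp h4 with h | h
    · exact absurd (by linarith : gam ξ u k p (b+1) = 1) hγb1
    · exact h
  obtain ⟨hsa1, hsa2⟩ := bspline_support hξ' p (a+1) s hNa1
  obtain ⟨hsb1, hsb2⟩ := bspline_support hξ' p b s' hNb
  have hs'b1 : s' ≤ insKnot ξ k u (b+1) := by
    by_contra hc; push_neg at hc
    have hpos : 0 < bspline (insKnot ξ k u) (b+1) p s' :=
      bspline_pos hξ' p (b+1) s'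
        (Or.inl ⟨hc, lt_of_lt_of_le hsb2 (hξ' (show b+p+1 ≤ b+1+p+1 by omega))⟩)
    rw [hNb1] at hpos; exact lt_irrefl 0 hpos
  have hsa : insKnot ξ k u a ≤ s := le_trans (hξ' (show a ≤ a+1 by omega)) hsa1
  have hmono_b1 : insKnot ξ k u (b+1) ≤ insKnot ξ k u (a+p+1) := hξ' (by omega)
  rcases lt_or_eq_of_le hsa with hlt | heq
  · have hge : insKnot ξ k u (a+p+1) ≤ s := by
      by_contra hc; push_neg at hc
      have hpos : 0 < bspline (insKnot ξ k u) a p s :=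
        bspline_pos hξ' p a s (Or.inl ⟨hlt, hc⟩)
      rw [hNa] at hpos; exact lt_irrefl 0 hpos
    linarith
  · have he1 : insKnot ξ k u (a+1) = s :=
      le_antisymm hsa1 (by rw [← heq]; exact hξ' (by omega))
    rcases bspline_char hξ' p (a+1) s hNa1 with ⟨hc1, _⟩ | ⟨_, hc2, _⟩
    · rw [he1] at hc1; exact lt_irrefl s hc1
    · have e3 : insKnot ξ k u (b+1) ≤ insKnot ξ k u (a+1+p) := hξ' (by omega)
      rw [← hc2, he1] at e3
      linarith

def SatV (η : ℕ → ℝ) (p : ℕ) (v : ℝ) : Prop := ∃ m, η m = v ∧ η (m + p) = v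

lemma sat_of_pair {η : ℕ → ℝ} (hm : Monotone η) {p r s : ℕ} {v : ℝ} (hrs : r + p ≤ s)
    (h1 : η r = v) (h2 : η s = v) : SatV η p v := by
  refine ⟨r, h1, le_antisymm ?_ ?_⟩
  · have h3 := hm hrs; rw [h2] at h3; exact h3
  · have h3 := hm (Nat.le_add_right r p); rw [h1] at h3; exact h3

lemma not_sat_finite {η : ℕ → ℝ} (hm : Monotone η) {p : ℕ} {v : ℝ} (h : ¬ SatV η p v) :
    {r | η r = v}.Finite := by
  by_contra hc
  have hinf : {r | η r = v}.Infinite := hc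
  obtain ⟨r, hr⟩ := hinf.nonempty
  have hbd : ¬ ∀ s ∈ {r | η r = v}, s ≤ r + p := by
    intro hb
    exact hinf (Set.Finite.subset (Set.finite_Iic (r+p)) hb)
  push_neg at hbd
  obtain ⟨s, hs, hlt⟩ := hbd
  exact h (sat_of_pair hm (by omega) hr hs)

lemma not_sat_card {η : ℕ → ℝ} (hm : Monotone η) {p : ℕ} {v : ℝ} (h : ¬ SatV η p v) :
    Set.ncard {r | η r = v} ≤ p := by
  have hfin := not_sat_finite hm h
  by_contra hc
  push_neg at hc
  have hcard : p < hfin.toFinset.card := by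
    rwa [← Set.ncard_eq_toFinset_card _ hfin]
  have hne : hfin.toFinset.Nonempty := Finset.card_pos.mp (by omega)
  set r := hfin.toFinset.min' hne with hrdef
  set s := hfin.toFinset.max' hne with hsdef
  have hsub : hfin.toFinset ⊆ Finset.Icc r s := by
    intro m hmem
    exact Finset.mem_Icc.mpr ⟨hfin.toFinset.min'_le m hmem, hfin.toFinset.le_max' m hmem⟩
  have hle := Finset.card_le_card hsub
  rw [Nat.card_Icc] at hle
  have hr : η r = v := (Set.Finite.mem_toFinset hfin).mp (hfin.toFinset.min'_mem hne)
  have hs : η s = v := (Set.Finite.mem_toFinset hfin).mp (hfin.toFinset.max'_mem hne)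
  exact h (sat_of_pair hm (show r + p ≤ s by omega) hr hs)

open Classical in
noncomputable def multV (η : ℕ → ℝ) (p : ℕ) (v : ℝ) : ℕ :=
  if SatV η p v then p + 1 else Set.ncard {r | η r = v}

lemma sat_insKnot (hξ : Monotone ξ) (hku : ξ k ≤ u) (hk1 : u < ξ (k+1)) {p : ℕ} {v : ℝ}
    (h : SatV ξ p v) : SatV (insKnot ξ k u) p v := by
  obtain ⟨m, h1, h2⟩ := h
  rcases le_or_gt (m+p) k with hc | hc
  · exact ⟨m, by rw [insKnot_of_le (by omega)]; exact h1,
      by rw [insKnot_of_le (by omega)]; exact h2⟩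
  rcases le_or_gt (k+1) m with hc' | hc'
  · refine ⟨m+1, ?_, ?_⟩
    · rw [insKnot_of_ge (by omega), show m+1-1 = m by omega]; exact h1
    · rw [show m+1+p = (m+p)+1 by omega, insKnot_of_ge (by omega),
        show (m+p)+1-1 = m+p by omega]; exact h2
  · exfalso
    have e1 : ξ m ≤ ξ k := hξ (by omega)
    have e2 : ξ (k+1) ≤ ξ (m+p) := hξ (by omega)
    rw [h1] at e1; rw [h2] at e2
    linarith

lemma multV_mono_ins (hξ : Monotone ξ) (hku : ξ k ≤ u) (hk1 : u < ξ (k+1)) (p : ℕ) (v : ℝ) :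
    multV ξ p v ≤ multV (insKnot ξ k u) p v := by
  unfold multV
  by_cases hS : SatV ξ p v
  · rw [if_pos hS, if_pos (sat_insKnot hξ hku hk1 hS)]
  · rw [if_neg hS]
    by_cases hS' : SatV (insKnot ξ k u) p v
    · rw [if_pos hS']
      exact le_trans (not_sat_card hξ hS) (by omega)
    · rw [if_neg hS']
      have hinj : Function.Injective (fun r => if r ≤ k then r else r + 1) := by
        intro a b hab
        simp only at hab
        split_ifs at hab <;> omega
      have himg : (fun r => if r ≤ k then r else r + 1) '' {r | ξ r = v} ⊆
          {r | insKnot ξ k u r = v} := by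
        rintro _ ⟨r, hr, rfl⟩
        have hgoal : (if r ≤ k then r else r + 1) ∈ {r | insKnot ξ k u r = v} → _ := id
        by_cases hrk : r ≤ k
        · show insKnot ξ k u (if r ≤ k then r else r + 1) = v
          rw [if_pos hrk, insKnot_of_le hrk]; exact hr
        · show insKnot ξ k u (if r ≤ k then r else r + 1) = v
          rw [if_neg hrk, insKnot_of_ge (by omega), show r+1-1 = r by omega]; exact hr
      calc Set.ncard {r | ξ r = v}
          = ((fun r => if r ≤ k then r else r + 1) '' {r | ξ r = v}).ncard :=
            (Set.ncard_image_of_injective _ hinj).symm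
        _ ≤ Set.ncard {r | insKnot ξ k u r = v} :=
            Set.ncard_le_ncard himg (not_sat_finite (insKnot_mono hξ hku hk1) hS')

lemma multV_self_ins (hξ : Monotone ξ) (hku : ξ k ≤ u) (hk1 : u < ξ (k+1)) (p : ℕ)
    (h : ¬ SatV ξ p u) : multV ξ p u + 1 ≤ multV (insKnot ξ k u) p u := by
  unfold multV
  rw [if_neg h]
  by_cases hS' : SatV (insKnot ξ k u) p u
  · rw [if_pos hS']
    have := not_sat_card hξ h
    omega
  · rw [if_neg hS']
    have hinj : Function.Injective (fun r => if r ≤ k then r else r + 1) := by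
      intro a b hab
      simp only at hab
      split_ifs at hab <;> omega
    have himg : insert (k+1) ((fun r => if r ≤ k then r else r + 1) '' {r | ξ r = u}) ⊆
        {r | insKnot ξ k u r = u} := by
      intro m hmem
      rcases Set.mem_insert_iff.mp hmem with hm1 | hm2
      · rw [hm1]; exact insKnot_k1
      · obtain ⟨r, hr, hfr⟩ := hm2
        have hfr' : (if r ≤ k then r else r + 1) = m := hfr
        by_cases hrk : r ≤ k
        · rw [if_pos hrk] at hfr'
          show insKnot ξ k u m = u
          rw [← hfr', insKnot_of_le hrk]; exact hr
        · rw [if_neg hrk] at hfr'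
          show insKnot ξ k u m = u
          rw [← hfr', insKnot_of_ge (by omega), show r+1-1 = r by omega]; exact hr
    have hnotmem : (k+1) ∉ (fun r => if r ≤ k then r else r + 1) '' {r | ξ r = u} := by
      rintro ⟨r, _, hfr⟩
      simp only at hfr
      split_ifs at hfr <;> omega
    have hfinim : ((fun r => if r ≤ k then r else r + 1) '' {r | ξ r = u}).Finite :=
      (not_sat_finite hξ h).image _
    calc Set.ncard {r | ξ r = u} + 1
        = ((fun r => if r ≤ k then r else r + 1) '' {r | ξ r = u}).ncard + 1 := by
          rw [Set.ncard_image_of_injective _ hinj]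
      _ = (insert (k+1) ((fun r => if r ≤ k then r else r + 1) '' {r | ξ r = u})).ncard :=
          (Set.ncard_insert_of_notMem hnotmem hfinim).symm
      _ ≤ Set.ncard {r | insKnot ξ k u r = u} :=
          Set.ncard_le_ncard himg (not_sat_finite (insKnot_mono hξ hku hk1) hS')

noncomputable def defc (η : ℕ → ℝ) (p : ℕ) {n : ℕ} (t : Fin n → ℝ) : ℕ :=
  ∑ i : Fin n, (p + 1 - multV η p (t i))

lemma defc_sat {η : ℕ → ℝ} (hm : Monotone η) {p n : ℕ} {t : Fin n → ℝ}
    (h : defc η p t = 0) : ∀ i : Fin n, SatV η p (t i) := by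
  intro i
  by_contra hc
  have h1 : multV η p (t i) ≤ p := by
    unfold multV; rw [if_neg hc]; exact not_sat_card hm hc
  have h2 : p + 1 - multV η p (t i) ≠ 0 := by omega
  exact h2 (Finset.sum_eq_zero_iff.mp h i (Finset.mem_univ i))

lemma defc_ins_lt (hξ : Monotone ξ) (hku : ξ k ≤ u) (hk1 : u < ξ (k+1)) {p n : ℕ}
    {t : Fin n → ℝ} (i0 : Fin n) (h : ¬ SatV ξ p (t i0)) (hu : u = t i0) :
    defc (insKnot ξ k u) p t < defc ξ p t := by
  apply Finset.sum_lt_sum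
  · intro i _
    exact Nat.sub_le_sub_left (multV_mono_ins hξ hku hk1 p (t i)) _
  · refine ⟨i0, Finset.mem_univ _, ?_⟩
    have h1 := multV_self_ins hξ hku hk1 p (hu ▸ h)
    have h2 : multV ξ p (t i0) ≤ p := by
      unfold multV; rw [if_neg h]; exact not_sat_card hξ h
    rw [← hu] at h2 ⊢
    omega

lemma sat_eval {η : ℕ → ℝ} (hm : Monotone η) {p : ℕ} {v : ℝ} (hS : SatV η p v) {j : ℕ}
    (h : bspline η j p v ≠ 0) : η j = v ∧ η (j + p) = v ∧ v < η (j + p + 1) := by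
  obtain ⟨m, hm1, hm2⟩ := hS
  rcases bspline_char hm p j v h with ⟨hc1, hc2⟩ | ⟨hc1, hc2, hc3⟩
  · exfalso
    have hjm : j < m := by
      by_contra hc; push_neg at hc
      have h3 := hm hc
      rw [hm1] at h3; linarith
    have hmj : m + p < j + p + 1 := by
      by_contra hc; push_neg at hc
      have h3 := hm hc
      rw [hm2] at h3; linarith
    omega
  · refine ⟨hc1.symm, ?_, hc3⟩
    rw [← hc2]; exact hc1.symm

lemma sat_unique {η : ℕ → ℝ} (hm : Monotone η) {p j j' : ℕ} {v : ℝ}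
    (h1 : η j = v ∧ η (j+p) = v ∧ v < η (j+p+1))
    (h2 : η j' = v ∧ η (j'+p) = v ∧ v < η (j'+p+1)) : j = j' := by
  by_contra hc
  rcases Nat.lt_or_ge j j' with hlt | hge
  · have h3 := hm (show j+p+1 ≤ j'+p by omega)
    rw [h2.2.1] at h3; linarith [h1.2.2]
  · have hlt : j' < j := by omega
    have h3 := hm (show j'+p+1 ≤ j+p by omega)
    rw [h1.2.1] at h3; linarith [h2.2.2]

lemma fin_strictMono_le {n : ℕ} (φ : Fin n → Fin n) (h : StrictMono φ) :
    ∀ i : Fin n, (i : ℕ) ≤ (φ i : ℕ) := by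
  suffices H : ∀ v (hv : v < n), v ≤ (φ ⟨v, hv⟩ : ℕ) by
    intro i
    have := H i.1 i.2
    simpa using this
  intro v
  induction v with
  | zero => intro hv; exact Nat.zero_le _
  | succ m ihm =>
    intro hv
    have hm : m < n := by omega
    have h1 := ihm hm
    have h2 : φ ⟨m, hm⟩ < φ ⟨m+1, hv⟩ := h (by simp [Fin.lt_def])
    have h3 := Fin.lt_def.mp h2
    omega

lemma fin_strictMono_id {n : ℕ} (φ : Fin n → Fin n) (h : StrictMono φ) : ∀ i, φ i = i := by
  intro i
  have h1 := fin_strictMono_le φ h i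
  have hψ : StrictMono (fun i : Fin n => (φ i.rev).rev) := by
    intro a b hab
    have h2 : b.rev < a.rev := Fin.rev_lt_rev.mpr hab
    have h3 := h h2
    exact Fin.rev_lt_rev.mpr h3
  have h2 := fin_strictMono_le _ hψ i.rev
  simp only [Fin.rev_rev] at h2
  have h3 : (φ i : ℕ) ≤ i := by
    have := Fin.rev_le_rev.mp (Fin.le_def.mpr h2)
    exact Fin.le_def.mp this
  exact Fin.ext (le_antisymm h3 h1)

lemma base_det_pos {η : ℕ → ℝ} (hm : Monotone η) {p n : ℕ} {t : Fin n → ℝ} (ht : StrictMono t)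
    {jj : Fin n → ℕ} (hjj : StrictMono jj) (hsat : ∀ i, SatV η p (t i))
    (hdiag : ∀ i, bspline η (jj i) p (t i) ≠ 0) :
    0 < (Matrix.of fun i l : Fin n => bspline η (jj l) p (t i)).det := by
  have hentry : ∀ i l : Fin n, i ≠ l → bspline η (jj l) p (t i) = 0 := by
    intro i l hne
    by_contra hc
    have e1 := sat_eval hm (hsat i) hc
    have e2 := sat_eval hm (hsat i) (hdiag i)
    exact hne (hjj.injective (sat_unique hm e2 e1))
  have hdiagM : (Matrix.of fun i l : Fin n => bspline η (jj l) p (t i)) =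
      Matrix.diagonal (fun i => bspline η (jj i) p (t i)) := by
    ext i l
    by_cases hil : i = l
    · subst hil; simp [Matrix.diagonal]
    · simp [Matrix.diagonal, hil, hentry i l hil]
  rw [hdiagM, Matrix.det_diagonal]
  apply Finset.prod_pos
  intro i _
  rcases lt_or_eq_of_le (bspline_nonneg hm p (jj i) (t i)) with h | h
  · exact h
  · exact absurd h.symm (hdiag i)

lemma base_det_nonneg {η : ℕ → ℝ} (hm : Monotone η) {p n : ℕ} {t : Fin n → ℝ}
    (ht : StrictMono t) {jj : Fin n → ℕ} (hjj : StrictMono jj)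
    (hsat : ∀ i, SatV η p (t i)) :
    0 ≤ (Matrix.of fun i l : Fin n => bspline η (jj l) p (t i)).det := by
  by_cases hrow : ∀ i : Fin n, ∃ l, bspline η (jj l) p (t i) ≠ 0
  · choose φ hφ using hrow
    have hmono : StrictMono φ := by
      intro i i' hii
      have e1 := sat_eval hm (hsat i) (hφ i)
      have e2 := sat_eval hm (hsat i') (hφ i')
      have hlt : jj (φ i) < jj (φ i') := by
        by_contra hcc; push_neg at hcc
        have h3 := hm hcc
        rw [e1.1, e2.1] at h3
        exact absurd (ht hii) (not_lt.mpr h3)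
      exact hjj.lt_iff_lt.mp hlt
    have hid := fin_strictMono_id φ hmono
    have hdiag : ∀ i, bspline η (jj i) p (t i) ≠ 0 := by
      intro i
      have h4 := hφ i
      rwa [hid i] at h4
    exact le_of_lt (base_det_pos hm ht hjj hsat hdiag)
  · push_neg at hrow
    obtain ⟨i, hi⟩ := hrow
    have hz : (Matrix.of fun i l : Fin n => bspline η (jj l) p (t i)).det = 0 :=
      Matrix.det_eq_zero_of_row_eq_zero i (fun l => hi l)
    rw [hz]

lemma det_expand (hξ : Monotone ξ) (hku : ξ k ≤ u) (hk1 : u < ξ (k+1)) (p : ℕ) {n : ℕ}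
    (t : Fin n → ℝ) (jj : Fin n → ℕ) :
    (Matrix.of fun i l : Fin n => bspline ξ (jj l) p (t i)).det
    = ∑ ε : Fin n → Bool,
        (∏ l : Fin n, (if ε l then 1 - gam ξ u k p (jj l + 1) else gam ξ u k p (jj l))) *
        (Matrix.of fun i l : Fin n =>
          bspline (insKnot ξ k u) (if ε l then jj l + 1 else jj l) p (t i)).det := by
  rw [← Matrix.det_transpose]
  have hM : (Matrix.of fun i l : Fin n => bspline ξ (jj l) p (t i)).transpose
      = Matrix.of (fun l : Fin n => ∑ b : Bool,
          (if b then (1 - gam ξ u k p (jj l + 1)) else gam ξ u k p (jj l)) •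
          (fun i : Fin n =>
            bspline (insKnot ξ k u) (if b then jj l + 1 else jj l) p (t i))) := by
    ext l i
    simp only [Matrix.transpose_apply, Matrix.of_apply, Fintype.sum_bool, Pi.add_apply,
      Pi.smul_apply, smul_eq_mul, if_pos rfl, if_neg Bool.false_ne_true, if_true]
    rw [boehm hξ hku hk1 p (jj l) (t i)]
    ring
  rw [hM]
  have hdet : ∀ (g : Fin n → Fin n → ℝ), (Matrix.of g).det
      = (Matrix.detRowAlternating : (Fin n → ℝ) [⋀^Fin n]→ₗ[ℝ] ℝ).toMultilinearMap g :=
    fun _ => rfl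
  rw [hdet]
  rw [MultilinearMap.map_sum]
  apply Finset.sum_congr rfl
  intro ε _
  rw [MultilinearMap.map_smul_univ, smul_eq_mul]
  congr 1
  rw [← hdet, ← Matrix.det_transpose]
  congr 1

section SelSection
open Classical

noncomputable def selE (A0 : ℕ → Prop) (jjN : ℕ → ℕ) : ℕ → Bool
  | 0 => decide (¬ A0 0)
  | (m+1) => decide ((¬ A0 (m+1)) ∨ (selE A0 jjN m = true ∧ jjN (m+1) = jjN m + 1))

lemma selE_zero (A0 : ℕ → Prop) (jjN : ℕ → ℕ) : selE A0 jjN 0 = decide (¬ A0 0) := rfl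

lemma selE_succ (A0 : ℕ → Prop) (jjN : ℕ → ℕ) (m : ℕ) :
    selE A0 jjN (m+1)
      = decide ((¬ A0 (m+1)) ∨ (selE A0 jjN m = true ∧ jjN (m+1) = jjN m + 1)) := rfl

lemma selE_spec (A0 A1 : ℕ → Prop) (jjN : ℕ → ℕ)
    (hne : ∀ m, A0 m ∨ A1 m)
    (hchain : ∀ a b, a < b → ¬ A0 a → A1 b) :
    ∀ m, (selE A0 jjN m = true → A1 m) ∧ (selE A0 jjN m = false → A0 m) ∧
      (selE A0 jjN m = true → ∃ l0, l0 ≤ m ∧ ¬ A0 l0) := by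
  intro m
  induction m with
  | zero =>
    refine ⟨?_, ?_, ?_⟩
    · intro h
      rw [selE_zero] at h
      have h1 : ¬ A0 0 := of_decide_eq_true h
      rcases hne 0 with h' | h'
      · exact absurd h' h1
      · exact h'
    · intro h
      rw [selE_zero] at h
      have h1 := of_decide_eq_false h
      exact not_not.mp h1
    · intro h
      rw [selE_zero] at h
      exact ⟨0, le_refl 0, of_decide_eq_true h⟩
  | succ m ih =>
    refine ⟨?_, ?_, ?_⟩
    · intro h
      rcases of_decide_eq_true h with h' | h'
      · rcases hne (m+1) with h'' | h''
        · exact absurd h'' h'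
        · exact h''
      · obtain ⟨l0, hl0, hA⟩ := ih.2.2 h'.1
        exact hchain l0 (m+1) (by omega) hA
    · intro h
      have h1 := of_decide_eq_false h
      push_neg at h1
      exact h1.1
    · intro h
      rcases of_decide_eq_true h with h' | h'
      · exact ⟨m+1, le_refl _, h'⟩
      · obtain ⟨l0, hl0, hA⟩ := ih.2.2 h'.1
        exact ⟨l0, by omega, hA⟩

lemma selE_step (A0 : ℕ → Prop) (jjN : ℕ → ℕ) (m : ℕ)
    (h1 : selE A0 jjN m = true) (h2 : jjN (m+1) = jjN m + 1) :
    selE A0 jjN (m+1) = true := by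
  rw [selE_succ]
  exact decide_eq_true (Or.inr ⟨h1, h2⟩)

end SelSection

theorem main_det (p : ℕ) : ∀ (D : ℕ) (ξ : ℕ → ℝ), Monotone ξ → ∀ (n : ℕ) (t : Fin n → ℝ),
    StrictMono t → ∀ (jj : Fin n → ℕ), StrictMono jj → defc ξ p t ≤ D →
    0 ≤ (Matrix.of fun i l : Fin n => bspline ξ (jj l) p (t i)).det ∧
    ((∀ i, bspline ξ (jj i) p (t i) ≠ 0) →
      0 < (Matrix.of fun i l : Fin n => bspline ξ (jj l) p (t i)).det) := by
  intro D
  induction D with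
  | zero =>
    intro ξ hξ n t ht jj hjj hD
    have hsat := defc_sat hξ (Nat.le_zero.mp hD)
    exact ⟨base_det_nonneg hξ ht hjj hsat, fun hdiag => base_det_pos hξ ht hjj hsat hdiag⟩
  | succ D ih =>
    intro ξ hξ n t ht jj hjj hD
    by_cases hall : ∀ i, SatV ξ p (t i)
    · exact ⟨base_det_nonneg hξ ht hjj hall, fun hdiag => base_det_pos hξ ht hjj hall hdiag⟩
    push_neg at hall
    obtain ⟨i0, hi0⟩ := hall
    by_cases hslot : ∃ k, ξ k ≤ t i0 ∧ t i0 < ξ (k+1)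
    · obtain ⟨k, hsl1, hsl2⟩ := hslot
      have hξ' : Monotone (insKnot ξ k (t i0)) := insKnot_mono hξ hsl1 hsl2
      have hD' : defc (insKnot ξ k (t i0)) p t ≤ D := by
        have hlt := defc_ins_lt hξ hsl1 hsl2 i0 hi0 rfl
        omega
      rw [det_expand hξ hsl1 hsl2 p t jj]
      have hco : ∀ ε : Fin n → Bool, 0 ≤ ∏ l : Fin n,
          (if ε l then 1 - gam ξ (t i0) k p (jj l + 1) else gam ξ (t i0) k p (jj l)) := by
        intro ε
        apply Finset.prod_nonneg
        intro l _
        by_cases hb : ε l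
        · rw [if_pos hb]
          have := gam_le_one hξ hsl1 hsl2 p (jj l + 1)
          linarith
        · rw [if_neg hb]
          exact gam_nonneg hξ hsl1 hsl2 p (jj l)
      have hcolmono : ∀ ε : Fin n → Bool, ∀ l l' : Fin n, l < l' →
          (if ε l then jj l + 1 else jj l) ≤ (if ε l' then jj l' + 1 else jj l') := by
        intro ε l l' hll
        have h1 : jj l < jj l' := hjj hll
        split_ifs <;> omega
      have hterm : ∀ ε : Fin n → Bool, 0 ≤
          (∏ l : Fin n, (if ε l then 1 - gam ξ (t i0) k p (jj l + 1) else gam ξ (t i0) k p (jj l))) *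
          (Matrix.of fun i l : Fin n =>
            bspline (insKnot ξ k (t i0)) (if ε l then jj l + 1 else jj l) p (t i)).det := by
        intro ε
        by_cases hsm : StrictMono (fun l : Fin n => if ε l then jj l + 1 else jj l)
        · exact mul_nonneg (hco ε) (ih (insKnot ξ k (t i0)) hξ' n t ht _ hsm hD').1
        · have hdup : ∃ l l' : Fin n, l < l' ∧
              (if ε l then jj l + 1 else jj l) = (if ε l' then jj l' + 1 else jj l') := by
            by_contra hc
            push_neg at hc
            apply hsm
            intro l l' hll
            rcases lt_or_eq_of_le (hcolmono ε l l' hll) with h | h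
            · exact h
            · exact absurd h (hc l l' hll)
          obtain ⟨l, l', hll, heq⟩ := hdup
          have hz : (Matrix.of fun i m : Fin n =>
              bspline (insKnot ξ k (t i0)) (if ε m then jj m + 1 else jj m) p (t i)).det = 0 := by
            rw [← Matrix.det_transpose]
            apply Matrix.det_zero_of_row_eq (ne_of_lt hll)
            funext i
            show bspline (insKnot ξ k (t i0)) (if ε l then jj l + 1 else jj l) p (t i)
              = bspline (insKnot ξ k (t i0)) (if ε l' then jj l' + 1 else jj l') p (t i)
            rw [heq]
          rw [hz, mul_zero]
      refine ⟨Finset.sum_nonneg (fun ε _ => hterm ε), ?_⟩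
      intro hdiag
      classical
      set A0 : ℕ → Prop := fun m => ∀ h : m < n,
        gam ξ (t i0) k p (jj ⟨m, h⟩) *
          bspline (insKnot ξ k (t i0)) (jj ⟨m, h⟩) p (t ⟨m, h⟩) ≠ 0 with hA0def
      set A1 : ℕ → Prop := fun m => ∀ h : m < n,
        (1 - gam ξ (t i0) k p (jj ⟨m, h⟩ + 1)) *
          bspline (insKnot ξ k (t i0)) (jj ⟨m, h⟩ + 1) p (t ⟨m, h⟩) ≠ 0 with hA1def
      set jjN : ℕ → ℕ := fun m => if h : m < n then jj ⟨m, h⟩ else 0 with hjjNdef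
      have hsum : ∀ l : Fin n,
          gam ξ (t i0) k p (jj l) * bspline (insKnot ξ k (t i0)) (jj l) p (t l)
          + (1 - gam ξ (t i0) k p (jj l + 1)) *
              bspline (insKnot ξ k (t i0)) (jj l + 1) p (t l) ≠ 0 := by
        intro l
        rw [← boehm hξ hsl1 hsl2 p (jj l) (t l)]
        exact hdiag l
      have hne : ∀ m, A0 m ∨ A1 m := by
        intro m
        by_cases hm : m < n
        · by_cases hG : gam ξ (t i0) k p (jj ⟨m, hm⟩) *
              bspline (insKnot ξ k (t i0)) (jj ⟨m, hm⟩) p (t ⟨m, hm⟩) = 0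
          · right
            intro h
            have hs := hsum ⟨m, hm⟩
            rw [hG] at hs
            intro hz
            rw [hz] at hs
            simp at hs
          · left
            intro h
            exact hG
        · left
          intro h
          exact absurd h hm
      have hchain : ∀ a b, a < b → ¬ A0 a → A1 b := by
        intro a b hab hnA0
        have ha : a < n := by
          by_contra hc
          exact hnA0 (fun h => absurd h hc)
        have hGa : gam ξ (t i0) k p (jj ⟨a, ha⟩) *
            bspline (insKnot ξ k (t i0)) (jj ⟨a, ha⟩) p (t ⟨a, ha⟩) = 0 := by
          by_contra hc
          exact hnA0 (fun _ => hc)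
        have hHa : (1 - gam ξ (t i0) k p (jj ⟨a, ha⟩ + 1)) *
            bspline (insKnot ξ k (t i0)) (jj ⟨a, ha⟩ + 1) p (t ⟨a, ha⟩) ≠ 0 := by
          rcases hne a with h0 | h1
          · exact absurd h0 hnA0
          · exact h1 ha
        intro hb
        by_contra hnA1b
        have hGb : gam ξ (t i0) k p (jj ⟨b, hb⟩) *
            bspline (insKnot ξ k (t i0)) (jj ⟨b, hb⟩) p (t ⟨b, hb⟩) ≠ 0 := by
          rcases hne b with h0 | h1
          · exact h0 hb
          · exact absurd hnA1b (h1 hb)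
        exact chain_impossible hξ hsl1 hsl2 p
          (hjj (Fin.mk_lt_mk.mpr hab))
          (ht (Fin.mk_lt_mk.mpr hab))
          hGa hHa hGb hnA1b
      have spec := selE_spec A0 A1 jjN hne hchain
      set ε : Fin n → Bool := fun l => selE A0 jjN l.1 with hεdef
      have hA1use : ∀ l : Fin n, ε l = true →
          (1 - gam ξ (t i0) k p (jj l + 1)) *
            bspline (insKnot ξ k (t i0)) (jj l + 1) p (t l) ≠ 0 := by
        intro l hl
        have := (spec l.1).1 hl l.isLt
        simpa using this
      have hA0use : ∀ l : Fin n, ε l = false →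
          gam ξ (t i0) k p (jj l) *
            bspline (insKnot ξ k (t i0)) (jj l) p (t l) ≠ 0 := by
        intro l hl
        have := (spec l.1).2.1 hl l.isLt
        simpa using this
      have hsmε : StrictMono (fun l : Fin n => if ε l then jj l + 1 else jj l) := by
        intro l l' hll
        rcases lt_or_eq_of_le (hcolmono ε l l' hll) with h | h
        · exact h
        exfalso
        have h1 : jj l < jj l' := hjj hll
        by_cases hbl : ε l = true
        case neg =>
          rw [if_neg hbl] at h
          have h2 : (if ε l' then jj l' + 1 else jj l') ≥ jj l' := by split_ifs <;> omega
          omega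
        by_cases hbl' : ε l' = true
        case pos =>
          rw [if_pos hbl, if_pos hbl'] at h
          omega
        rw [if_pos hbl, if_neg hbl'] at h
        have hadj : (l' : ℕ) = (l : ℕ) + 1 := by
          by_contra hc
          have hmid : (l : ℕ) + 1 < (l' : ℕ) := by
            have := Fin.lt_def.mp hll
            omega
          have hmlt : (⟨(l : ℕ) + 1, by omega⟩ : Fin n) < l' := by
            rw [Fin.lt_def]; exact hmid
          have hlmid : l < (⟨(l : ℕ) + 1, by omega⟩ : Fin n) := by
            rw [Fin.lt_def]; exact Nat.lt_succ_self _
          have g1 := hjj hlmid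
          have g2 := hjj hmlt
          omega
        have hjjNeq : jjN ((l : ℕ) + 1) = jjN (l : ℕ) + 1 := by
          rw [hjjNdef]
          simp only
          rw [dif_pos (show (l:ℕ)+1 < n by omega), dif_pos l.isLt]
          have hgen : ∀ (g1 : (l:ℕ)+1 < n) (g2 : (l:ℕ) < n),
              jj ⟨(l:ℕ)+1, g1⟩ = jj ⟨(l:ℕ), g2⟩ + 1 := by
            intro g1 g2
            have e1 : (⟨(l:ℕ)+1, g1⟩ : Fin n) = l' := Fin.ext hadj.symm
            have e2 : (⟨(l:ℕ), g2⟩ : Fin n) = l := Fin.ext rfl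
            rw [e1, e2, ← h]
          exact hgen _ _
        have hstep := selE_step A0 jjN (l : ℕ) hbl hjjNeq
        have hfin : ε l' = true := by
          have e3 : ε l' = selE A0 jjN ((l' : ℕ)) := by rw [hεdef]
          rw [e3, hadj]
          exact hstep
        exact hbl' hfin
      have hdiag' : ∀ i : Fin n,
          bspline (insKnot ξ k (t i0)) (if ε i then jj i + 1 else jj i) p (t i) ≠ 0 := by
        intro i
        by_cases hb : ε i = true
        case pos =>
          rw [if_pos hb]
          intro hz
          exact hA1use i hb (by rw [hz, mul_zero])
        case neg =>
          rw [if_neg hb]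
          intro hz
          exact hA0use i (Bool.not_eq_true (ε i) ▸ hb) (by rw [hz, mul_zero])
      have hcopos : 0 < ∏ l : Fin n,
          (if ε l then 1 - gam ξ (t i0) k p (jj l + 1) else gam ξ (t i0) k p (jj l)) := by
        apply Finset.prod_pos
        intro l _
        by_cases hb : ε l = true
        case neg =>
          rw [if_neg hb]
          have h1 : gam ξ (t i0) k p (jj l) ≠ 0 := by
            intro hz
            exact hA0use l (Bool.not_eq_true (ε l) ▸ hb) (by rw [hz, zero_mul])
          have h2 := gam_nonneg hξ hsl1 hsl2 p (jj l)
          rcases lt_or_eq_of_le h2 with h | h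
          · exact h
          · exact absurd h.symm h1
        case pos =>
          rw [if_pos hb]
          have h1 : 1 - gam ξ (t i0) k p (jj l + 1) ≠ 0 := by
            intro hz
            exact hA1use l hb (by rw [hz, zero_mul])
          have h2 := gam_le_one hξ hsl1 hsl2 p (jj l + 1)
          rcases lt_or_eq_of_le h2 with h | h
          · linarith
          · exfalso; apply h1; rw [h]; ring
      have hpos : 0 <
          (∏ l : Fin n, (if ε l then 1 - gam ξ (t i0) k p (jj l + 1) else gam ξ (t i0) k p (jj l))) *
          (Matrix.of fun i l : Fin n =>
            bspline (insKnot ξ k (t i0)) (if ε l then jj l + 1 else jj l) p (t i)).det :=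
        mul_pos hcopos ((ih (insKnot ξ k (t i0)) hξ' n t ht _ hsmε hD').2 hdiag')
      exact Finset.sum_pos' (fun ε' _ => hterm ε') ⟨ε, Finset.mem_univ _, hpos⟩
    · have hrow : ∀ l, bspline ξ (jj l) p (t i0) = 0 := by
        intro l
        by_contra hc
        obtain ⟨hs1, hs2⟩ := bspline_support hξ p (jj l) (t i0) hc
        exact hslot (slot_exists hξ hs1 hs2)
      have hdet : (Matrix.of fun i l : Fin n => bspline ξ (jj l) p (t i)).det = 0 :=
        Matrix.det_eq_zero_of_row_eq_zero i0 (fun l => hrow l)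
      constructor
      · rw [hdet]
      · intro hdiag
        exact absurd (hrow i0) (hdiag i0)

/-- Nonsingularity of the B-spline collocation matrix (Schoenberg–Whitney-type
condition): if `t 0 < t 1 < ⋯ < t (n-1)` are collocation points with
`N_{i,p}(t i) ≠ 0` for every `i`, then the collocation matrix `C i j = N_{j,p}(t i)`
is nonsingular, and the square quasi-interpolation system
`∑ j, q j · N_{j,p}(t i) = g (t i)` has a unique solution for any data `g`. -/
theorem bspline_collocation_nonsingular (ξ : ℕ → ℝ) (hξ : ∀ i, ξ i ≤ ξ (i + 1))
    (p n : ℕ) (t : Fin n → ℝ) (ht : StrictMono t)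
    (hdiag : ∀ i : Fin n, bspline ξ (i : ℕ) p (t i) ≠ 0) :
    (Matrix.of fun i j : Fin n => bspline ξ (j : ℕ) p (t i)).det ≠ 0 ∧
    ∀ g : ℝ → ℝ, ∃! q : Fin n → ℝ,
      ∀ i : Fin n, ∑ j : Fin n, q j * bspline ξ (j : ℕ) p (t i) = g (t i) := by
  have hmono : Monotone ξ := monotone_nat_of_le_succ hξ
  have hjj : StrictMono (fun i : Fin n => (i : ℕ)) := fun a b hab => hab
  have hdetpos : 0 < (Matrix.of fun i j : Fin n => bspline ξ (j : ℕ) p (t i)).det :=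
    (main_det p (defc ξ p t) ξ hmono n t ht _ hjj le_rfl).2 (fun i => hdiag i)
  have hdet' : (Matrix.of fun i j : Fin n => bspline ξ (j : ℕ) p (t i)).det ≠ 0 :=
    ne_of_gt hdetpos
  refine ⟨hdet', ?_⟩
  intro g
  set C := Matrix.of fun i j : Fin n => bspline ξ (j : ℕ) p (t i) with hC
  have hunit : IsUnit C.det := isUnit_iff_ne_zero.mpr hdet'
  set b : Fin n → ℝ := fun i => g (t i) with hb
  have hsys : ∀ q : Fin n → ℝ,
      (∀ i, ∑ j : Fin n, q j * bspline ξ (j : ℕ) p (t i) = g (t i)) ↔ C.mulVec q = b := by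
    intro q
    constructor
    · intro hq
      funext i
      show ∑ j : Fin n, C i j * q j = b i
      rw [Finset.sum_congr rfl (fun j _ => mul_comm (C i j) (q j))]
      exact hq i
    · intro hq i
      show ∑ j : Fin n, q j * bspline ξ (j : ℕ) p (t i) = b i
      have h2 : ∑ j : Fin n, C i j * q j = b i := congrFun hq i
      rw [← h2, Finset.sum_congr rfl (fun j _ => mul_comm (C i j) (q j))]
      rfl
  refine ⟨C⁻¹.mulVec b, ?_, ?_⟩
  · apply (hsys _).mpr
    rw [Matrix.mulVec_mulVec, Matrix.mul_nonsing_inv _ hunit, Matrix.one_mulVec]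
  · intro q hq
    have h1 := (hsys q).mp hq
    calc q = (C⁻¹ * C).mulVec q := by
          rw [Matrix.nonsing_inv_mul _ hunit, Matrix.one_mulVec]
      _ = C⁻¹.mulVec (C.mulVec q) := by rw [Matrix.mulVec_mulVec]
      _ = C⁻¹.mulVec b := by rw [h1]
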